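/- Let p_v ≥ 1 and p_c > 0 be real numbers. For every real z, if 0 < g1(z) < 1 then p_c/(1+p_v·p_c) < z < 1/p_v. -/
import Mathlib


/-- The threshold function `g1`. -/
noncomputable def g1 (pv pc z : ℝ) : ℝ :=
  pv * pc * (z - pc / (1 + pv * pc)) / ((2 * pv * pc + 1) / (pv * (1 + pv * pc)) - z)

/-- If `0 < g1(z) < 1` then `pc/(1 + pv pc) < z < 1/pv`. -/
theorem g1_range (pv pc : ℝ) (hpv : 1 ≤ pv) (hpc : 0 < pc) (z : ℝ)
    (h0 : 0 < g1 pv pc z) (h1 : g1 pv pc z < 1) :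
    pc / (1 + pv * pc) < z ∧ z < 1 / pv := by
  have hpv0 : (0:ℝ) < pv := lt_of_lt_of_le one_pos hpv
  have hA : (0:ℝ) < 1 + pv * pc := by positivity
  rw [g1] at h0 h1
  set N := pv * pc * (z - pc / (1 + pv * pc)) with hN
  set D := (2 * pv * pc + 1) / (pv * (1 + pv * pc)) - z with hD
  have hDpos : 0 < D := by
    rcases lt_trichotomy D 0 with hl | he | hg
    · -- both negative: N < 0 and D < 0, leads to contradiction
      have hNneg : N < 0 := by
        rcases div_pos_iff.mp h0 with ⟨_, h⟩ | ⟨h, _⟩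
        · linarith
        · exact h
      have hz1 : z < pc / (1 + pv * pc) := by
        have := (mul_neg_iff.mp hNneg)
        rcases this with ⟨_, h⟩ | ⟨h, _⟩
        · nlinarith
        · nlinarith
      -- but then D > 0 since pc/(1+pv pc) < (2pvpc+1)/(pv(1+pvpc))
      have key : pc / (1 + pv * pc) < (2 * pv * pc + 1) / (pv * (1 + pv * pc)) := by
        rw [div_lt_div_iff₀ hA (by positivity)]
        nlinarith
      have : 0 < D := by rw [hD]; linarith
      linarith
    · rw [he, div_zero] at h0; linarith
    · exact hg
  have hNpos : 0 < N := by
    rcases div_pos_iff.mp h0 with ⟨h, _⟩ | ⟨_, h⟩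
    · exact h
    · linarith
  have hu : pc / (1 + pv * pc) * (1 + pv * pc) = pc := div_mul_cancel₀ _ (ne_of_gt hA)
  have hv : (2 * pv * pc + 1) / (pv * (1 + pv * pc)) * (pv * (1 + pv * pc)) = 2 * pv * pc + 1 :=
    div_mul_cancel₀ _ (by positivity)
  constructor
  · rcases mul_pos_iff.mp hNpos with ⟨_, h⟩ | ⟨h, _⟩
    · linarith
    · nlinarith
  · have hND : N < D := (div_lt_one hDpos).mp h1
    rw [hN, hD] at hND
    rw [lt_div_iff₀ hpv0]
    have key := mul_lt_mul_of_pos_right hND (mul_pos hpv0 hA)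
    nlinarith [sq_nonneg (pv*pc), mul_pos hpv0 hA, mul_pos hpv0 hpc]
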